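/- There is no one-tape deterministic Turing machine solving the word problem for the free group F₂ on two generators in subquadratic time. Precisely: there is no Turing machine M in Mathlib's one-tape model (Turing.TM0.Machine Γ Λ, where the tape alphabet Γ contains a blank symbol and four distinguished symbols a, b, a⁻¹, b⁻¹, with finite state set Λ and a distinguished set of accepting states), together with a function f : ℕ → ℕ with f(n) = o(n²), such that for every word w (a list over the four symbols a, b, a⁻¹, b⁻¹) of length n, when M is started in its initial state on a tape containing w with the head at the first letter of w (blanks elsewhere), M halts within f(n) steps (i.e. Turing.TM0.step applied iteratively at most f(n) times reaches a configuration on which step returns none), and the halting state is accepting if and only if w represents the identity element of the free group on two generators. -/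

import Mathlib

/-- Evaluation of a word over the alphabet `{a, b, a⁻¹, b⁻¹}` (encoded as
`Fin 2 × Bool`) in the free group on two generators. -/
def wordEval (w : List (Fin 2 × Bool)) : FreeGroup (Fin 2) :=
  (w.map fun p => if p.2 then FreeGroup.of p.1 else (FreeGroup.of p.1)⁻¹).prod

/-- Iterate the step function of a one-tape Turing machine `m` times,
starting from configuration `c` (in the `Option` monad). -/
def TMsteps {Γ Λ : Type*} [Inhabited Γ] [Inhabited Λ]
    (M : Turing.TM0.Machine Γ Λ) (m : ℕ) (c : Turing.TM0.Cfg Γ Λ) :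
    Option (Turing.TM0.Cfg Γ Λ) :=
  (fun o => o.bind (Turing.TM0.step M))^[m] (some c)

/-!
Hennie's crossing-sequence argument. For `x, y ∈ {a, b}ⁿ` the word `x aⁿ a⁻ⁿ y⁻¹` has length `4n`
and is trivial iff `x = y`. A run of length `m` on `x aⁿ a⁻ⁿ x⁻¹` crosses one of the `2n` cuts inside
the padding at most `m / 2n` times, and `m = o(n²)` makes this `o(n)`. Hence there are fewer pairs
(cut, crossing sequence) than words `x`, and two words `x ≠ y` share such a pair. Gluing the left part
of the run on `x aⁿ a⁻ⁿ x⁻¹` to the right part of the run on `y aⁿ a⁻ⁿ y⁻¹` along the common crossing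
sequence gives a run on the nontrivial word `x aⁿ a⁻ⁿ y⁻¹` that halts in an accepting state.
-/

open Turing

section HaltsIn

variable {σ τ : Type*}

def HaltsIn (f : σ → Option σ) (a : σ) (n : ℕ) (b : σ) : Prop :=
  (fun o => o.bind f)^[n] (some a) = some b ∧ f b = none

variable {f : σ → Option σ} {a a' b : σ} {n : ℕ}

lemma haltsIn_zero : HaltsIn f a 0 b ↔ b = a ∧ f a = none := by
  constructor
  · rintro ⟨h, hb⟩
    obtain rfl := Option.some_injective _ h
    exact ⟨rfl, hb⟩
  · rintro ⟨rfl, hb⟩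
    exact ⟨rfl, hb⟩

lemma haltsIn_succ : HaltsIn f a (n + 1) b ↔ ∃ a', f a = some a' ∧ HaltsIn f a' n b := by
  rw [HaltsIn, Function.iterate_succ_apply, Option.bind_some]
  rcases f a with _ | a'
  · simp [Function.iterate_fixed]
  · simp [HaltsIn]

lemma HaltsIn.eq_of_halted (h : HaltsIn f a n b) (ha : f a = none) : b = a := by
  cases n with
  | zero => exact (haltsIn_zero.1 h).1
  | succ n => simp [haltsIn_succ, ha] at h

lemma HaltsIn.of_step (h : HaltsIn f a n b) (ha : f a = some a') :
    ∃ n', n = n' + 1 ∧ HaltsIn f a' n' b := by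
  cases n with
  | zero => simp [(haltsIn_zero.1 h).2] at ha
  | succ n => simpa [haltsIn_succ, ha] using h

lemma HaltsIn.mem_eval (h : HaltsIn f a n b) : b ∈ StateTransition.eval f a := by
  refine StateTransition.mem_eval.2 ⟨?_, h.2⟩
  induction n generalizing a with
  | zero => exact (haltsIn_zero.1 h).1 ▸ .refl
  | succ n ih =>
    obtain ⟨a', ha, h'⟩ := haltsIn_succ.1 h
    exact .head ha (ih h')

lemma HaltsIn.exists_of_rel {g : τ → Option τ} {R : σ → τ → Prop}
    (hR : ∀ a c, R a c → Option.Rel R (f a) (g c)) {c : τ} (hac : R a c) (h : HaltsIn f a n b) :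
    ∃ d, R b d ∧ HaltsIn g c n d := by
  induction n generalizing a c with
  | zero =>
    obtain ⟨rfl, ha⟩ := haltsIn_zero.1 h
    have hrel := hR b c hac
    rw [ha] at hrel
    generalize hgc : g c = oc at hrel
    cases hrel
    exact ⟨c, hac, haltsIn_zero.2 ⟨rfl, hgc⟩⟩
  | succ n ih =>
    obtain ⟨a', ha, h'⟩ := haltsIn_succ.1 h
    have hrel := hR a c hac
    rw [ha] at hrel
    generalize hgc : g c = oc at hrel
    rcases hrel with ⟨hac'⟩
    obtain ⟨d, hbd, hd⟩ := ih hac' h'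
    exact ⟨d, hbd, haltsIn_succ.2 ⟨_, hgc, hd⟩⟩

end HaltsIn

namespace OneTape

section Step

variable {Γ Λ : Type*} [Inhabited Λ]

/-- The head position is absolute, so that a cut between two cells stays put while the head moves
(`Turing.Tape` is indexed relative to the head). -/
structure AbsCfg (Γ Λ : Type*) where
  q : Λ
  pos : ℤ
  tape : ℤ → Γ

def shift : Dir → ℤ
  | .left => -1
  | .right => 1

def AbsCfg.exec (z : AbsCfg Γ Λ) : Λ × TM0.Stmt Γ → AbsCfg Γ Λ
  | (q, .move d) => ⟨q, z.pos + shift d, z.tape⟩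
  | (q, .write a) => ⟨q, z.pos, Function.update z.tape z.pos a⟩

def step (M : TM0.Machine Γ Λ) (z : AbsCfg Γ Λ) : Option (AbsCfg Γ Λ) :=
  (M z.q (z.tape z.pos)).map z.exec

variable {M : TM0.Machine Γ Λ} {z z' : AbsCfg Γ Λ}

lemma pos_step_mem (h : step M z = some z') : z'.pos ∈ Set.Icc (z.pos - 1) (z.pos + 1) := by
  obtain ⟨⟨q, d | a⟩, -, rfl⟩ := Option.map_eq_some_iff.1 h
  · cases d <;> simp only [AbsCfg.exec, shift, Set.mem_Icc] <;> omega
  · simp [AbsCfg.exec]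

lemma tape_step_of_ne (h : step M z = some z') {i : ℤ} (hi : i ≠ z.pos) :
    z'.tape i = z.tape i := by
  obtain ⟨⟨q, d | a⟩, -, rfl⟩ := Option.map_eq_some_iff.1 h
  · rfl
  · exact Function.update_of_ne hi _ _

def glue (b : ℤ) (TL TR : ℤ → Γ) : ℤ → Γ := fun i => if i ≤ b then TL i else TR i

lemma step_glue_left {b : ℤ} (h : z.pos ≤ b) (T : ℤ → Γ) :
    step M ⟨z.q, z.pos, glue b z.tape T⟩ =
      (step M z).map fun z' => ⟨z'.q, z'.pos, glue b z'.tape T⟩ := by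
  have hhead : glue b z.tape T z.pos = z.tape z.pos := if_pos h
  dsimp only [step]
  rw [hhead, Option.map_map]
  congr 1
  funext s
  rcases s with ⟨q, d | a⟩
  · rfl
  · simp only [AbsCfg.exec, Function.comp_apply, AbsCfg.mk.injEq, true_and]
    funext i
    by_cases hi : i = z.pos
    · subst hi; simp [glue, h]
    · simp [glue, hi]

lemma step_glue_right {b : ℤ} (h : b < z.pos) (T : ℤ → Γ) :
    step M ⟨z.q, z.pos, glue b T z.tape⟩ =
      (step M z).map fun z' => ⟨z'.q, z'.pos, glue b T z'.tape⟩ := by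
  have hhead : glue b T z.tape z.pos = z.tape z.pos := if_neg h.not_ge
  dsimp only [step]
  rw [hhead, Option.map_map]
  congr 1
  funext s
  rcases s with ⟨q, d | a⟩
  · rfl
  · simp only [AbsCfg.exec, Function.comp_apply, AbsCfg.mk.injEq, true_and]
    funext i
    by_cases hi : i = z.pos
    · subst hi; simp [glue, h.not_ge]
    · simp [glue, hi]

end Step

section CrossingSequence

variable {Γ Λ : Type*} [Inhabited Λ] {M : TM0.Machine Γ Λ} {z z' : AbsCfg Γ Λ}

/-- The states entered, in order, each time the head crosses the cut between cells `b` and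
`b + 1` during (at most) the first `n` steps from `z`. -/
def crossSeq (M : TM0.Machine Γ Λ) (b : ℤ) : ℕ → AbsCfg Γ Λ → List Λ
  | 0, _ => []
  | n + 1, z =>
    match step M z with
    | none => []
    | some z' => if (z.pos ≤ b ↔ z'.pos ≤ b) then crossSeq M b n z' else z'.q :: crossSeq M b n z'

lemma crossSeq_of_step_eq_none (h : step M z = none) (b : ℤ) (n : ℕ) : crossSeq M b n z = [] := by
  cases n <;> simp [crossSeq, h]

lemma crossSeq_succ_of_step (h : step M z = some z') (b : ℤ) (n : ℕ) :
    crossSeq M b (n + 1) z =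
      if (z.pos ≤ b ↔ z'.pos ≤ b) then crossSeq M b n z' else z'.q :: crossSeq M b n z' := by
  simp [crossSeq, h]

lemma sum_length_crossSeq_le (S : Finset ℤ) (n : ℕ) (z : AbsCfg Γ Λ) :
    ∑ b ∈ S, (crossSeq M b n z).length ≤ n := by
  induction n generalizing z with
  | zero => simp [crossSeq]
  | succ n ih =>
    rcases hz : step M z with _ | z'
    · simp [crossSeq_of_step_eq_none hz]
    have hlen (b : ℤ) : (crossSeq M b (n + 1) z).length =
        (if ¬(z.pos ≤ b ↔ z'.pos ≤ b) then 1 else 0) + (crossSeq M b n z').length := by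
      rw [crossSeq_succ_of_step hz]
      split_ifs <;> simp_all [add_comm]
    have hpos := pos_step_mem hz
    -- only the cut at `min z.pos z'.pos` can be crossed in one step
    have hone : (S.filter fun b => ¬(z.pos ≤ b ↔ z'.pos ≤ b)).card ≤ 1 :=
      Finset.card_le_one.2 fun b hb c hc => by
        simp only [Finset.mem_filter, Set.mem_Icc] at hb hc hpos
        omega
    simp only [hlen, Finset.sum_add_distrib, Finset.sum_boole, Nat.cast_id]
    have := ih z'
    omega

lemma exists_card_mul_length_crossSeq_le {S : Finset ℤ} (hS : S.Nonempty) (n : ℕ)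
    (z : AbsCfg Γ Λ) : ∃ b ∈ S, S.card * (crossSeq M b n z).length ≤ n :=
  Finset.exists_le_of_sum_le hS <| by
    rw [← Finset.mul_sum, Finset.sum_const, smul_eq_mul]
    exact Nat.mul_le_mul_left _ (sum_length_crossSeq_le S n z)

lemma exists_next_crossing {b : ℤ} {n : ℕ} {f : AbsCfg Γ Λ} {q : Λ} {l : List Λ}
    (h : HaltsIn (step M) z n f) (hcs : crossSeq M b n z = q :: l) :
    ∃ n' < n, ∃ z', HaltsIn (step M) z' n' f ∧ z'.q = q ∧ crossSeq M b n' z' = l ∧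
      z'.pos = (if z.pos ≤ b then b + 1 else b) ∧
      ∀ i, (i ≤ b ↔ z'.pos ≤ b) → z'.tape i = z.tape i := by
  induction n generalizing z with
  | zero => simp [crossSeq] at hcs
  | succ n ih =>
    obtain ⟨z₁, hz, h₁⟩ := haltsIn_succ.1 h
    have hpos := pos_step_mem hz
    rw [Set.mem_Icc] at hpos
    rw [crossSeq_succ_of_step hz] at hcs
    split_ifs at hcs with hside
    · obtain ⟨n', hn', z', h', hq, hl, hp, htape⟩ := ih h₁ hcs
      refine ⟨n', by omega, z', h', hq, hl, ?_, fun i hi => ?_⟩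
      · simp only [hside, hp]
      · rw [htape i hi, tape_step_of_ne hz]
        split_ifs at hp <;> omega
    · obtain ⟨rfl, rfl⟩ := List.cons.inj hcs
      refine ⟨n, n.lt_succ_self, z₁, h₁, rfl, rfl, ?_, fun i hi => tape_step_of_ne hz ?_⟩
      · split_ifs <;> omega
      · omega

end CrossingSequence

section CutPaste

open StateTransition

variable {Γ Λ : Type*} [Inhabited Λ] {M : TM0.Machine Γ Λ}

/-- Hennie's cut-and-paste property for halting runs from `a` and `c` with the same crossing
sequence at the cut `b`: on the tape glued from the left half of `a` and the right half of `c`,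
the machine imitates `a` while its head is on the left and `c` while it is on the right. -/
def CutPaste (M : TM0.Machine Γ Λ) (b : ℤ) (nA nB : ℕ) : Prop :=
  ∀ a c fA fC : AbsCfg Γ Λ, HaltsIn (step M) a nA fA → HaltsIn (step M) c nB fC →
    crossSeq M b nA a = crossSeq M b nB c →
    (a.pos ≤ b → c.pos ≤ b →
      ∃ g ∈ eval (step M) ⟨a.q, a.pos, glue b a.tape c.tape⟩, g.q = fA.q ∨ g.q = fC.q) ∧
    (b < a.pos → b < c.pos →
      ∃ g ∈ eval (step M) ⟨c.q, c.pos, glue b a.tape c.tape⟩, g.q = fA.q ∨ g.q = fC.q)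

variable {b : ℤ} {nA nB : ℕ} {a c fA fC : AbsCfg Γ Λ}

lemma cutPaste_left (ih : ∀ m m', m + m' < nA + nB → CutPaste M b m m')
    (hA : HaltsIn (step M) a nA fA) (hC : HaltsIn (step M) c nB fC)
    (hcs : crossSeq M b nA a = crossSeq M b nB c) (ha : a.pos ≤ b) (hc : c.pos ≤ b) :
    ∃ g ∈ eval (step M) ⟨a.q, a.pos, glue b a.tape c.tape⟩, g.q = fA.q ∨ g.q = fC.q := by
  rcases hstep : step M a with _ | a₁
  · refine ⟨_, mem_eval.2 ⟨.refl, ?_⟩, Or.inl (congrArg AbsCfg.q (hA.eq_of_halted hstep)).symm⟩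
    rw [step_glue_left ha, hstep, Option.map_none]
  obtain ⟨nA', rfl, hA₁⟩ := hA.of_step hstep
  rw [reaches_eval (.single (by rw [step_glue_left ha, hstep]; rfl))]
  beta_reduce
  have hpos := pos_step_mem hstep
  rw [Set.mem_Icc] at hpos
  rw [crossSeq_succ_of_step hstep] at hcs
  split_ifs at hcs with hside
  · exact (ih nA' nB (by omega) a₁ c fA fC hA₁ hC hcs).1 (hside.1 ha) hc
  · -- `a` has just crossed to the right; fast-forward `c` to its first crossing, which enters
    -- the same state, and continue by imitating `c`
    obtain ⟨nB', hnB', c', hC', hq, hcs', hp, htape⟩ := exists_next_crossing hC hcs.symm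
    rw [if_pos hc] at hp
    have hglue : (⟨a₁.q, a₁.pos, glue b a₁.tape c.tape⟩ : AbsCfg Γ Λ) =
        ⟨c'.q, c'.pos, glue b a₁.tape c'.tape⟩ := by
      congr 1
      · exact hq.symm
      · omega
      · funext i
        simp only [glue]
        split_ifs with hi
        · rfl
        · exact (htape i (by omega)).symm
    rw [hglue]
    exact (ih nA' nB' (by omega) a₁ c' fA fC hA₁ hC' hcs'.symm).2 (by omega) (by omega)

lemma cutPaste_right (ih : ∀ m m', m + m' < nA + nB → CutPaste M b m m')
    (hA : HaltsIn (step M) a nA fA) (hC : HaltsIn (step M) c nB fC)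
    (hcs : crossSeq M b nA a = crossSeq M b nB c) (ha : b < a.pos) (hc : b < c.pos) :
    ∃ g ∈ eval (step M) ⟨c.q, c.pos, glue b a.tape c.tape⟩, g.q = fA.q ∨ g.q = fC.q := by
  rcases hstep : step M c with _ | c₁
  · refine ⟨_, mem_eval.2 ⟨.refl, ?_⟩, Or.inr (congrArg AbsCfg.q (hC.eq_of_halted hstep)).symm⟩
    rw [step_glue_right hc, hstep, Option.map_none]
  obtain ⟨nB', rfl, hC₁⟩ := hC.of_step hstep
  rw [reaches_eval (.single (by rw [step_glue_right hc, hstep]; rfl))]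
  beta_reduce
  have hpos := pos_step_mem hstep
  rw [Set.mem_Icc] at hpos
  rw [crossSeq_succ_of_step hstep] at hcs
  split_ifs at hcs with hside
  · exact (ih nA nB' (by omega) a c₁ fA fC hA hC₁ hcs).2 ha (by omega)
  · obtain ⟨nA', hnA', a', hA', hq, hcs', hp, htape⟩ := exists_next_crossing hA hcs
    rw [if_neg ha.not_ge] at hp
    have hglue : (⟨c₁.q, c₁.pos, glue b a.tape c₁.tape⟩ : AbsCfg Γ Λ) =
        ⟨a'.q, a'.pos, glue b a'.tape c₁.tape⟩ := by
      congr 1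
      · exact hq.symm
      · omega
      · funext i
        simp only [glue]
        split_ifs with hi
        · exact (htape i (by omega)).symm
        · rfl
    rw [hglue]
    exact (ih nA' nB' (by omega) a' c₁ fA fC hA' hC₁ hcs').1 (by omega) (by omega)

theorem cutPaste (M : TM0.Machine Γ Λ) (b : ℤ) (nA nB : ℕ) : CutPaste M b nA nB := by
  suffices ∀ N nA nB, nA + nB < N → CutPaste M b nA nB from this _ nA nB (Nat.lt_succ_self _)
  intro N
  induction N with
  | zero => intros; omega
  | succ N ih =>
    intro nA nB hN a c fA fC hA hC hcs
    have ih' (m m' : ℕ) (h : m + m' < nA + nB) : CutPaste M b m m' := ih m m' (by omega)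
    exact ⟨cutPaste_left ih' hA hC hcs, cutPaste_right ih' hA hC hcs⟩

end CutPaste

lemma _root_.List.eq_of_getElem?_fin_eq {α : Type*} {L : ℕ} {l₁ l₂ : List α}
    (h₁ : l₁.length ≤ L) (h₂ : l₂.length ≤ L)
    (h : (fun i : Fin L => l₁[(i : ℕ)]?) = fun i : Fin L => l₂[(i : ℕ)]?) : l₁ = l₂ :=
  List.ext_getElem? fun i =>
    if hi : i < L then congrFun h ⟨i, hi⟩
    else by rw [List.getElem?_eq_none (by omega), List.getElem?_eq_none (by omega)]

theorem exists_ne_crossSeq_eq {Γ Λ ι : Type*} [Inhabited Λ] [Fintype Λ] [Fintype ι]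
    (M : TM0.Machine Γ Λ) (z : ι → AbsCfg Γ Λ) (m : ι → ℕ) {S : Finset ℤ} (hS : S.Nonempty)
    {L : ℕ} (hm : ∀ x, m x < S.card * (L + 1))
    (hcard : S.card * (Fintype.card Λ + 1) ^ L < Fintype.card ι) :
    ∃ x y, x ≠ y ∧ ∃ b ∈ S, crossSeq M b (m x) (z x) = crossSeq M b (m y) (z y) := by
  choose b hbS hb using fun x => exists_card_mul_length_crossSeq_le (M := M) hS (m x) (z x)
  have hlen (x : ι) : (crossSeq M (b x) (m x) (z x)).length ≤ L :=
    Nat.lt_succ_iff.1 (Nat.lt_of_mul_lt_mul_left ((hb x).trans_lt (hm x)))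
  let fingerprint (x : ι) : ℤ × (Fin L → Option Λ) :=
    (b x, fun i => (crossSeq M (b x) (m x) (z x))[(i : ℕ)]?)
  obtain ⟨x, -, y, -, hxy, hfp⟩ := Finset.exists_ne_map_eq_of_card_lt_of_maps_to
    (s := Finset.univ) (t := S ×ˢ Finset.univ) (f := fingerprint)
    (by simpa [Finset.card_product] using hcard)
    (fun x _ => Finset.mem_product.2 ⟨hbS x, Finset.mem_univ _⟩)
  obtain ⟨hbxy, hcs⟩ := Prod.ext_iff.1 hfp
  refine ⟨x, y, hxy, b x, hbS x, ?_⟩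
  simp only [fingerprint] at hbxy hcs
  rw [hbxy] at hcs ⊢
  exact List.eq_of_getElem?_fin_eq (hbxy ▸ hlen x) (hlen y) hcs

section Simulation

variable {Γ Λ : Type*} [Inhabited Γ] [Inhabited Λ]

def Represents (c : TM0.Cfg Γ Λ) (z : AbsCfg Γ Λ) : Prop :=
  c.q = z.q ∧ ∀ j, c.Tape.nth j = z.tape (z.pos + j)

lemma represents_step (M : TM0.Machine Γ Λ) {c : TM0.Cfg Γ Λ} {z : AbsCfg Γ Λ}
    (h : Represents c z) : Option.Rel Represents (TM0.step M c) (step M z) := by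
  obtain ⟨q, T⟩ := c
  obtain ⟨rfl, htape⟩ := h
  have hhead : T.1 = z.tape z.pos := by simpa using htape 0
  simp only [TM0.step, step, hhead]
  rcases M z.q (z.tape z.pos) with _ | ⟨q', d | a⟩
  · exact .none
  · refine .some ⟨rfl, fun j => ?_⟩
    cases d <;> simp only [AbsCfg.exec, shift, Tape.move_left_nth, Tape.move_right_nth, htape] <;>
      congr 1 <;> ring
  · refine .some ⟨rfl, fun j => ?_⟩
    rcases eq_or_ne j 0 with rfl | hj
    · simp [AbsCfg.exec, Tape.write]
    · simp [AbsCfg.exec, hj, htape]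

def initCfg (l : List Γ) : AbsCfg Γ Λ := ⟨default, 0, (Tape.mk₁ l).nth⟩

lemma exists_haltsIn_of_TMsteps {M : TM0.Machine Γ Λ} {l : List Γ} {m : ℕ} {c : TM0.Cfg Γ Λ}
    (hm : TMsteps M m (TM0.init l) = some c) (hc : TM0.step M c = none) :
    ∃ z, z.q = c.q ∧ HaltsIn (step M) (initCfg l) m z := by
  obtain ⟨z, ⟨hq, -⟩, hz⟩ := HaltsIn.exists_of_rel (fun _ _ => represents_step M)
    (c := initCfg l) ⟨rfl, fun j => by simp [initCfg, TM0.init]⟩ (⟨hm, hc⟩ : HaltsIn _ _ m c)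
  exact ⟨z, hq.symm, hz⟩

end Simulation

end OneTape

section Words

open FreeGroup

lemma wordEval_eq_mk (w : List (Fin 2 × Bool)) : wordEval w = FreeGroup.mk w := by
  rw [← lift_of_apply (FreeGroup.mk w), lift_mk, wordEval]
  congr 1
  simp [Bool.cond_eq_ite]

def posWord {n : ℕ} (x : Fin n → Fin 2) : List (Fin 2 × Bool) := List.ofFn fun i => (x i, true)

lemma wordEval_posWord_injective (n : ℕ) :
    Function.Injective fun x : Fin n → Fin 2 => wordEval (posWord x) := by
  have hred (x : Fin n → Fin 2) : IsReduced (posWord x) :=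
    (List.isChain_isInfix _).imp_of_mem_imp fun a b ha hb _ _ => by
      simp only [posWord, List.mem_ofFn] at ha hb
      obtain ⟨i, rfl⟩ := ha
      obtain ⟨j, rfl⟩ := hb
      rfl
  intro x y (h : wordEval (posWord x) = wordEval (posWord y))
  have := congrArg toWord h
  rw [wordEval_eq_mk, wordEval_eq_mk, toWord_mk, toWord_mk, (hred x).reduce_eq,
    (hred y).reduce_eq, posWord, posWord, List.ofFn_inj] at this
  exact funext fun i => congrArg Prod.fst (congrFun this i)

/-- `x aⁿ a⁻ⁿ y⁻¹`: the padding puts `2n` cuts `b ∈ [n, 3n)` between `x` and `y⁻¹`, at each of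
which the word agrees with `testWord x x` on the left and with `testWord y y` on the right. -/
def testWord {n : ℕ} (x y : Fin n → Fin 2) : List (Fin 2 × Bool) :=
  posWord x ++ posWord (0 : Fin n → Fin 2) ++ invRev (posWord (0 : Fin n → Fin 2)) ++
    invRev (posWord y)

lemma length_testWord {n : ℕ} (x y : Fin n → Fin 2) : (testWord x y).length = 4 * n := by
  simp only [testWord, List.length_append, invRev_length, posWord, List.length_ofFn]
  ring

lemma wordEval_testWord_eq_one {n : ℕ} {x y : Fin n → Fin 2} :
    wordEval (testWord x y) = 1 ↔ x = y := by
  simp only [testWord, wordEval_eq_mk, ← mul_mk, ← inv_mk, mul_inv_cancel_right]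
  rw [mul_inv_eq_one, ← wordEval_eq_mk, ← wordEval_eq_mk]
  exact (wordEval_posWord_injective n).eq_iff

end Words

section InitialTape

variable {Γ : Type*} [Inhabited Γ]

lemma Turing.Tape.mk₁_nth_append_of_lt {l l₁ l₂ : List Γ} {i : ℤ} (hi : i < l.length) :
    (Tape.mk₁ (l ++ l₁)).nth i = (Tape.mk₁ (l ++ l₂)).nth i := by
  rcases i with k | k
  · have hk : k < l.length := by rw [Int.ofNat_eq_natCast] at hi; exact_mod_cast hi
    simp only [Int.ofNat_eq_natCast, Tape.mk₁, Tape.mk₂, Tape.mk'_nth_nat, ListBlank.nth_mk,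
      List.getI_append _ _ _ hk]
  · rfl

lemma Turing.Tape.mk₁_nth_append_of_le {l₁ l₂ l : List Γ} {i : ℤ}
    (hl : l₁.length = l₂.length) (hi : l₁.length ≤ i) :
    (Tape.mk₁ (l₁ ++ l)).nth i = (Tape.mk₁ (l₂ ++ l)).nth i := by
  lift i to ℕ using (by omega)
  have hi : l₁.length ≤ i := by omega
  simp only [Tape.mk₁, Tape.mk₂, Tape.mk'_nth_nat, ListBlank.nth_mk,
    List.getI_append_right _ _ _ hi, List.getI_append_right _ _ _ (hl ▸ hi), hl]

end InitialTape

lemma glue_initCfg_testWord {Γ Λ : Type*} [Inhabited Γ] [Inhabited Λ] (enc : Fin 2 × Bool → Γ)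
    {n : ℕ} {b : ℤ} (hb : n ≤ b) (hb' : b < 3 * n) (x y : Fin n → Fin 2) :
    let a : OneTape.AbsCfg Γ Λ := OneTape.initCfg ((testWord x x).map enc)
    let c : OneTape.AbsCfg Γ Λ := OneTape.initCfg ((testWord y y).map enc)
    ⟨a.q, a.pos, OneTape.glue b a.tape c.tape⟩ = OneTape.initCfg ((testWord x y).map enc) := by
  simp only [OneTape.initCfg, OneTape.AbsCfg.mk.injEq, true_and]
  funext i
  by_cases hi : i ≤ b
  · simp only [OneTape.glue, hi, if_true, testWord, List.map_append]
    refine Tape.mk₁_nth_append_of_lt ?_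
    simp only [List.length_append, List.length_map, FreeGroup.invRev_length, posWord,
      List.length_ofFn]
    omega
  · simp only [OneTape.glue, hi, if_false, testWord, List.append_assoc, List.map_append]
    refine Tape.mk₁_nth_append_of_le (by simp [posWord]) ?_
    simp only [List.length_map, posWord, List.length_ofFn]
    omega

section Arithmetic

lemma exists_mul_le_sq_of_isLittleO {f : ℕ → ℕ}
    (hf : ∀ ε : ℝ, 0 < ε → ∃ N : ℕ, ∀ n ≥ N, (f n : ℝ) ≤ ε * (n : ℝ) ^ 2)
    {c k : ℕ} (hc : 0 < c) (hk : 0 < k) (n₀ : ℕ) : ∃ n ≥ n₀, c * f (k * n) ≤ n * n := by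
  obtain ⟨N, hN⟩ := hf (1 / (c * k ^ 2)) (by positivity)
  refine ⟨N + n₀, by omega, ?_⟩
  have h := hN (k * (N + n₀)) (by nlinarith)
  rw [← Nat.cast_le (α := ℝ)]
  push_cast at h ⊢
  have hc' : (0 : ℝ) < c := by exact_mod_cast hc
  have hk' : (0 : ℝ) < k := by exact_mod_cast hk
  calc (c : ℝ) * f (k * (N + n₀)) ≤ c * (1 / (c * k ^ 2) * (k * (N + n₀)) ^ 2) := by gcongr
    _ = (N + n₀) * (N + n₀) := by field_simp

lemma two_mul_mul_two_pow_half_lt {n : ℕ} (hn : 16 ≤ n) : 2 * n * 2 ^ (n / 2) < 2 ^ n := by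
  set t := n / 2
  have hpow : 2 ^ t = 2 ^ (t - 3) * 2 ^ 3 := by rw [← pow_add, Nat.sub_add_cancel (by omega)]
  have hlin : 2 * n < 2 ^ t := by
    have := Nat.lt_two_pow_self (n := t - 3)
    omega
  calc 2 * n * 2 ^ t < 2 ^ t * 2 ^ t := Nat.mul_lt_mul_of_pos_right hlin (by positivity)
    _ = 2 ^ (2 * t) := by ring
    _ ≤ 2 ^ n := Nat.pow_le_pow_right two_pos (by omega)

lemma two_mul_mul_pow_lt_two_pow (k : ℕ) {n : ℕ} (hn : 16 ≤ n) :
    2 * n * (k + 1) ^ (n / (2 * (k + 1))) < 2 ^ n := by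
  set L := n / (2 * (k + 1))
  have hL : (k + 1) * L ≤ n / 2 := by
    rw [Nat.le_div_iff_mul_le two_pos]
    have : 2 * (k + 1) * L ≤ n := Nat.mul_div_le n _
    linarith
  calc 2 * n * (k + 1) ^ L ≤ 2 * n * (2 ^ (k + 1)) ^ L := by
        gcongr; exact (Nat.lt_two_pow_self).le
    _ ≤ 2 * n * 2 ^ (n / 2) := by
        rw [← pow_mul]; gcongr; norm_num
    _ < 2 ^ n := two_mul_mul_two_pow_half_lt hn

lemma lt_two_mul_mul_div_succ {k m n : ℕ} (hn : 0 < n) (hm : (k + 1) * m ≤ n * n) :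
    m < 2 * n * (n / (2 * (k + 1)) + 1) := by
  have h := Nat.lt_mul_div_succ n (show 0 < 2 * (k + 1) by omega)
  refine Nat.lt_of_mul_lt_mul_left (a := k + 1) (hm.trans_lt ?_)
  calc n * n < n * (2 * (k + 1) * (n / (2 * (k + 1)) + 1)) := Nat.mul_lt_mul_of_pos_left h hn
    _ = (k + 1) * (2 * n * (n / (2 * (k + 1)) + 1)) := by ring

end Arithmetic

open OneTape

/-- The word problem for the free group on two generators cannot be solved in
subquadratic time by a one-tape Turing machine. -/
theorem no_subquadratic_word_problem :
    ¬ ∃ (Γ Λ : Type) (_ : Inhabited Γ) (_ : Inhabited Λ) (_ : Fintype Λ)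
      (enc : Fin 2 × Bool → Γ) (M : Turing.TM0.Machine Γ Λ) (Acc : Set Λ)
      (f : ℕ → ℕ),
      -- the four symbols a, b, a⁻¹, b⁻¹ are distinct and different from the blank
      Function.Injective enc ∧ (∀ x, enc x ≠ default) ∧
      -- f(n) = o(n²)
      (∀ ε : ℝ, 0 < ε → ∃ N : ℕ, ∀ n ≥ N, (f n : ℝ) ≤ ε * (n : ℝ) ^ 2) ∧
      -- the machine, started on the tape containing w with the head at its
      -- first letter, halts within f(|w|) steps, in an accepting state iff w
      -- represents the identity of F₂
      (∀ w : List (Fin 2 × Bool),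
        ∃ m ≤ f w.length, ∃ c : Turing.TM0.Cfg Γ Λ,
          TMsteps M m (Turing.TM0.init (w.map enc)) = some c ∧
          Turing.TM0.step M c = none ∧
          (c.q ∈ Acc ↔ wordEval w = 1)) := by
  rintro ⟨Γ, Λ, _, _, _, enc, M, Acc, f, -, -, hf, hM⟩
  set k := Fintype.card Λ
  obtain ⟨n, hn, hfn⟩ := exists_mul_le_sq_of_isLittleO hf k.succ_pos four_pos 16
  have hrun (x y : Fin n → Fin 2) : ∃ m ≤ f (4 * n), ∃ z,
      HaltsIn (step M) (initCfg ((testWord x y).map enc)) m z ∧ (z.q ∈ Acc ↔ x = y) := by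
    obtain ⟨m, hm, c, hc, hhalt, hacc⟩ := hM (testWord x y)
    obtain ⟨z, hq, hz⟩ := exists_haltsIn_of_TMsteps hc hhalt
    exact ⟨m, length_testWord x y ▸ hm, z, hz, by rw [hq, hacc, wordEval_testWord_eq_one]⟩
  choose m hm z hz hacc using hrun
  have hS : (Finset.Ico (n : ℤ) (3 * n)).card = 2 * n := by
    simp only [Int.card_Ico]
    omega
  obtain ⟨x, y, hxy, b, hb, hcs⟩ := exists_ne_crossSeq_eq M
    (fun x => initCfg ((testWord x x).map enc)) (fun x => m x x)
    (S := Finset.Ico (n : ℤ) (3 * n)) (Finset.nonempty_Ico.2 (by omega)) (L := n / (2 * (k + 1)))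
    (fun x => hS ▸ lt_two_mul_mul_div_succ (by omega) ((Nat.mul_le_mul_left _ (hm x x)).trans hfn))
    (by simpa [hS] using two_mul_mul_pow_lt_two_pow k hn)
  rw [Finset.mem_Ico] at hb
  obtain ⟨g, hg, hgq⟩ := (cutPaste M b _ _ _ _ _ _ (hz x x) (hz y y) hcs).1
    (show (0 : ℤ) ≤ b by omega) (show (0 : ℤ) ≤ b by omega)
  rw [glue_initCfg_testWord enc hb.1 hb.2] at hg
  obtain rfl := Part.mem_unique hg (hz x y).mem_eval
  exact hxy ((hacc x y).1 (hgq.elim (· ▸ (hacc x x).2 rfl) (· ▸ (hacc y y).2 rfl)))
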